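/- arXiv:1306.3637 — 5 statements merged into one kernel-verified Lean document; each statement's English description precedes it below -/
import Mathlib

section
/- Let L > 0. If λ ∈ ℂ and φ ∈ H³((0,L);ℂ) is not identically zero and satisfies λφ + φ′ + φ‴ = 0 on (0,L) together with φ(0) = φ(L) = φ′(L) = 0, then Re λ ≤ 0. -/
open Set Real

/-- any eigenvalue of the linear KdV operator `A φ = −φ′ − φ‴` with
domain `{φ ∈ H³((0,L);ℂ) : φ(0) = φ(L) = φ′(L) = 0}` has nonpositive real part.
Here `φ` is a complex-valued classical (`C³` on `[0,L]`) eigenfunction, not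
identically zero, and the eigenvalue equation `λφ + φ′ + φ‴ = 0` holds on `(0,L)`. -/
theorem kdv_eigenvalue_re_nonpos (L : ℝ) (hL : 0 < L) (lam : ℂ) (φ : ℝ → ℂ)
    (hreg : ContDiffOn ℝ 3 φ (Icc (0:ℝ) L))
    (hne : ∃ x ∈ Icc (0:ℝ) L, φ x ≠ 0)
    (heq : ∀ x ∈ Ioo (0:ℝ) L,
      lam * φ x + derivWithin φ (Icc (0:ℝ) L) x
        + iteratedDerivWithin 3 φ (Icc (0:ℝ) L) x = 0)
    (h0 : φ 0 = 0) (hLval : φ L = 0)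
    (hdL : derivWithin φ (Icc (0:ℝ) L) L = 0) :
    lam.re ≤ 0 := by
  set u : Set ℝ := Icc (0:ℝ) L with hu_def
  have hu : UniqueDiffOn ℝ u := uniqueDiffOn_Icc hL
  set f1 : ℝ → ℂ := iteratedDerivWithin 1 φ u with hf1
  set f2 : ℝ → ℂ := iteratedDerivWithin 2 φ u with hf2
  set f3 : ℝ → ℂ := iteratedDerivWithin 3 φ u with hf3
  have h0mem : (0:ℝ) ∈ u := left_mem_Icc.mpr hL.le
  have hLmem : L ∈ u := right_mem_Icc.mpr hL.le
  -- derivatives at interior points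
  have hder : ∀ k : ℕ, k < 3 → ∀ x ∈ Ioo (0:ℝ) L,
      HasDerivAt (iteratedDerivWithin k φ u) (iteratedDerivWithin (k+1) φ u x) x := by
    intro k hk x hx
    have hxu : x ∈ u := ⟨hx.1.le, hx.2.le⟩
    have hnb : u ∈ nhds x := Icc_mem_nhds hx.1 hx.2
    have hdiff : DifferentiableWithinAt ℝ (iteratedDerivWithin k φ u) u x :=
      hreg.differentiableOn_iteratedDerivWithin (by exact_mod_cast hk) hu x hxu
    have h1 : HasDerivAt (iteratedDerivWithin k φ u)
        (derivWithin (iteratedDerivWithin k φ u) u x) x :=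
      hdiff.hasDerivWithinAt.hasDerivAt hnb
    rwa [iteratedDerivWithin_succ]
  have hd0 : ∀ x ∈ Ioo (0:ℝ) L, HasDerivAt φ (f1 x) x := by
    intro x hx
    have := hder 0 (by norm_num) x hx
    simpa [hf1] using this
  have hd1 : ∀ x ∈ Ioo (0:ℝ) L, HasDerivAt f1 (f2 x) x := fun x hx =>
    hder 1 (by norm_num) x hx
  have hd2 : ∀ x ∈ Ioo (0:ℝ) L, HasDerivAt f2 (f3 x) x := fun x hx =>
    hder 2 (by norm_num) x hx
  -- continuity
  have hc0 : ContinuousOn φ u := hreg.continuousOn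
  have hc1 : ContinuousOn f1 u :=
    hreg.continuousOn_iteratedDerivWithin (by norm_num) hu
  have hc2 : ContinuousOn f2 u :=
    hreg.continuousOn_iteratedDerivWithin (by norm_num) hu
  -- the eigenvalue equation in terms of f1, f3
  have heq' : ∀ x ∈ Ioo (0:ℝ) L, f3 x = -(lam * φ x) - f1 x := by
    intro x hx
    have hxu : x ∈ u := ⟨hx.1.le, hx.2.le⟩
    have h := heq x hx
    have hf1x : f1 x = derivWithin φ u x := by rw [hf1, iteratedDerivWithin_one]
    rw [hf3, hf1x]
    linear_combination h
  -- energy function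
  set G : ℝ → ℂ := fun x => star (φ x) * φ x + 2 * (star (φ x) * f2 x)
      - star (f1 x) * f1 x with hG_def
  set H : ℝ → ℝ := fun x => (G x).re with hH_def
  have hHcont : ContinuousOn H u := by
    apply Complex.continuous_re.comp_continuousOn
    exact ((hc0.star.mul hc0).add (continuousOn_const.mul (hc0.star.mul hc2))).sub
      (hc1.star.mul hc1)
  have hHderiv : ∀ x ∈ Ioo (0:ℝ) L,
      HasDerivAt H (-(2 * lam.re) * Complex.normSq (φ x)) x := by
    intro x hx
    have d0 := hd0 x hx
    have d1 := hd1 x hx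
    have d2 := hd2 x hx
    have hG : HasDerivAt G
        ((star (f1 x) * φ x + star (φ x) * f1 x)
          + 2 * (star (f1 x) * f2 x + star (φ x) * f3 x)
          - (star (f2 x) * f1 x + star (f1 x) * f2 x)) x :=
      ((d0.star.mul d0).add ((d0.star.mul d2).const_mul 2)).sub (d1.star.mul d1)
    have hH : HasDerivAt H
        (((star (f1 x) * φ x + star (φ x) * f1 x)
          + 2 * (star (f1 x) * f2 x + star (φ x) * f3 x)
          - (star (f2 x) * f1 x + star (f1 x) * f2 x)).re) x := by
      have := Complex.reCLM.hasFDerivAt.comp_hasDerivAt x hG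
      exact this
    convert hH using 1
    rw [heq' x hx]
    simp only [Complex.star_def, Complex.add_re, Complex.sub_re, Complex.mul_re,
      Complex.conj_re, Complex.conj_im, Complex.neg_re, Complex.neg_im, Complex.sub_im,
      Complex.add_im, Complex.mul_im, Complex.normSq_apply, Complex.re_ofNat,
      Complex.im_ofNat]
    ring
  -- FTC
  have hint : IntervalIntegrable (fun x => -(2 * lam.re) * Complex.normSq (φ x))
      MeasureTheory.volume 0 L := by
    apply ContinuousOn.intervalIntegrable
    rw [uIcc_of_le hL.le]
    exact continuousOn_const.mul (Complex.continuous_normSq.comp_continuousOn hc0)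
  have hFTC := intervalIntegral.integral_eq_sub_of_hasDerivAt_of_le hL.le hHcont
    hHderiv hint
  -- boundary values
  have hf1L : f1 L = 0 := by rw [hf1, iteratedDerivWithin_one]; exact hdL
  have hHL : H L = 0 := by simp [hH_def, hG_def, hLval, hf1L]
  have hH0 : H 0 = -Complex.normSq (f1 0) := by
    simp [hH_def, hG_def, h0, Complex.star_def, ← Complex.normSq_eq_conj_mul_self]
  -- the integral of |φ|² is positive
  have hInn : ∀ x : ℝ, 0 ≤ Complex.normSq (φ x) := fun x => Complex.normSq_nonneg _
  have hIint : IntervalIntegrable (fun x => Complex.normSq (φ x))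
      MeasureTheory.volume 0 L := by
    apply ContinuousOn.intervalIntegrable
    rw [uIcc_of_le hL.le]
    exact Complex.continuous_normSq.comp_continuousOn hc0
  have hIpos : 0 < ∫ x in (0:ℝ)..L, Complex.normSq (φ x) := by
    obtain ⟨x₀, hx₀u, hx₀⟩ := hne
    have hg0 : 0 < Complex.normSq (φ x₀) := by
      simpa [Complex.normSq_pos] using hx₀
    -- find a neighbourhood where normSq φ stays above half its value at x₀
    have hcont : ContinuousWithinAt (fun x => Complex.normSq (φ x)) u x₀ :=
      (Complex.continuous_normSq.comp_continuousOn hc0) x₀ hx₀u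
    have hev : ∀ᶠ y in nhdsWithin x₀ u, Complex.normSq (φ x₀) / 2 < Complex.normSq (φ y) :=
      hcont.eventually (eventually_gt_nhds (by linarith))
    rw [eventually_nhdsWithin_iff, Metric.eventually_nhds_iff] at hev
    obtain ⟨δ, hδ, hball⟩ := hev
    set c : ℝ := max 0 (x₀ - δ/2) with hc_def
    set d : ℝ := min L (x₀ + δ/2) with hd_def
    have hcd : c < d := by
      have h1 : (0:ℝ) < d := lt_min hL (by linarith [hx₀u.1])
      have h2 : x₀ - δ/2 < d := lt_min (by linarith [hx₀u.2]) (by linarith)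
      exact max_lt h1 h2
    have hsub : Icc c d ⊆ u := Icc_subset_Icc (le_max_left _ _)
      (min_le_left _ _)
    have hposon : ∀ y ∈ Ioo c d, 0 < Complex.normSq (φ y) := by
      intro y hy
      have hyu : y ∈ u := hsub ⟨hy.1.le, hy.2.le⟩
      have hdist : dist y x₀ < δ := by
        rw [Real.dist_eq, abs_lt]
        constructor
        · have := hy.1
          have hc' : x₀ - δ/2 ≤ c := le_max_right _ _
          linarith
        · have := hy.2
          have hd' : d ≤ x₀ + δ/2 := min_le_right _ _
          linarith
      have := hball hdist hyu
      linarith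
    have hsmall : IntervalIntegrable (fun x => Complex.normSq (φ x))
        MeasureTheory.volume c d :=
      hIint.mono_set (by rw [uIcc_of_le hcd.le, uIcc_of_le hL.le]; exact hsub)
    have hpos_small : 0 < ∫ x in c..d, Complex.normSq (φ x) :=
      intervalIntegral.intervalIntegral_pos_of_pos_on hsmall hposon hcd
    have hmono : (∫ x in c..d, Complex.normSq (φ x))
        ≤ ∫ x in (0:ℝ)..L, Complex.normSq (φ x) := by
      apply intervalIntegral.integral_mono_interval (le_max_left _ _) hcd.le
        (min_le_left _ _)
      · exact Filter.Eventually.of_forall fun x => hInn x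
      · exact hIint
    linarith
  -- put it all together
  have hkey : -(2 * lam.re) * ∫ x in (0:ℝ)..L, Complex.normSq (φ x)
      = Complex.normSq (f1 0) := by
    rw [← intervalIntegral.integral_const_mul, hFTC, hHL, hH0]
    ring
  nlinarith [Complex.normSq_nonneg (f1 0), hIpos, hkey]
end

section
/- Let L > 0. If λ ∈ ℂ is purely imaginary (Re λ = 0) and φ ∈ H³((0,L);ℂ) satisfies λφ + φ′ + φ‴ = 0 on (0,L) together with φ(0) = φ(L) = φ′(L) = 0, then additionally φ′(0) = 0. -/
open Set Real

/-- if `λ ∈ ℂ` is purely imaginary and `φ ∈ H³((0,L);ℂ)` (here: `C³` on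
`[0,L]`) satisfies `λφ + φ′ + φ‴ = 0` on `(0,L)` with `φ(0) = φ(L) = φ′(L) = 0`,
then additionally `φ′(0) = 0`. -/
theorem kdv_imaginary_eigenfunction_extra_bc (L : ℝ) (hL : 0 < L)
    (lam : ℂ) (hre : lam.re = 0) (φ : ℝ → ℂ)
    (hreg : ContDiffOn ℝ 3 φ (Icc (0:ℝ) L))
    (heq : ∀ x ∈ Ioo (0:ℝ) L,
      lam * φ x + derivWithin φ (Icc (0:ℝ) L) x
        + iteratedDerivWithin 3 φ (Icc (0:ℝ) L) x = 0)
    (h0 : φ 0 = 0) (hLval : φ L = 0)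
    (hdL : derivWithin φ (Icc (0:ℝ) L) L = 0) :
    derivWithin φ (Icc (0:ℝ) L) 0 = 0 := by
  set s : Set ℝ := Icc (0:ℝ) L with hs_def
  have hs : UniqueDiffOn ℝ s := uniqueDiffOn_Icc hL
  set f1 : ℝ → ℂ := iteratedDerivWithin 1 φ s with hf1
  set f2 : ℝ → ℂ := iteratedDerivWithin 2 φ s with hf2
  set f3 : ℝ → ℂ := iteratedDerivWithin 3 φ s with hf3
  have hder1 : ∀ x ∈ s, HasDerivWithinAt φ (f1 x) s x := by
    intro x hx
    have := (hreg.differentiableOn (by norm_num)) x hx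
    have h := this.hasDerivWithinAt
    rwa [show derivWithin φ s x = f1 x by
      rw [hf1, iteratedDerivWithin_one]] at h
  have hder2 : ∀ x ∈ s, HasDerivWithinAt f1 (f2 x) s x := by
    intro x hx
    have := (hreg.differentiableOn_iteratedDerivWithin (m := 1) (by norm_num) hs) x hx
    have h := this.hasDerivWithinAt
    rwa [show derivWithin f1 s x = f2 x by
      rw [hf2, iteratedDerivWithin_succ]] at h
  have hder3 : ∀ x ∈ s, HasDerivWithinAt f2 (f3 x) s x := by
    intro x hx
    have := (hreg.differentiableOn_iteratedDerivWithin (m := 2) (by norm_num) hs) x hx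
    have h := this.hasDerivWithinAt
    rwa [show derivWithin f2 s x = f3 x by
      rw [hf3, iteratedDerivWithin_succ]] at h
  -- rewrite the ODE in terms of f1, f3
  have heq' : ∀ x ∈ Ioo (0:ℝ) L, lam * φ x + f1 x + f3 x = 0 := by
    intro x hx
    have h1 : f1 x = derivWithin φ s x := by
      rw [hf1, iteratedDerivWithin_one]
    rw [h1]
    exact heq x hx
  -- extend the ODE to the closed interval by continuity
  have hcontφ : ContinuousOn φ s := hreg.continuousOn
  have hcont1 : ContinuousOn f1 s :=
    hreg.continuousOn_iteratedDerivWithin (by norm_num) hs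
  have hcont2 : ContinuousOn f2 s :=
    hreg.continuousOn_iteratedDerivWithin (by norm_num) hs
  have hcont3 : ContinuousOn f3 s :=
    hreg.continuousOn_iteratedDerivWithin (by norm_num) hs
  have heqs : ∀ x ∈ s, lam * φ x + f1 x + f3 x = 0 := by
    intro x hx
    have hcl : x ∈ closure (Ioo (0:ℝ) L) := by
      rw [closure_Ioo hL.ne]; exact hx
    have hcw : ContinuousWithinAt (fun y => lam * φ y + f1 y + f3 y) (Ioo (0:ℝ) L) x := by
      exact ((((hcontφ.const_smul lam).add hcont1).add hcont3) x hx).mono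
        Ioo_subset_Icc_self |>.congr (fun y _ => by simp [smul_eq_mul]) (by simp [smul_eq_mul])
    have hne : (nhdsWithin x (Ioo (0:ℝ) L)).NeBot := mem_closure_iff_nhdsWithin_neBot.1 hcl
    have h1 : Filter.Tendsto (fun y => lam * φ y + f1 y + f3 y) (nhdsWithin x (Ioo (0:ℝ) L))
        (nhds (lam * φ x + f1 x + f3 x)) := hcw
    have h2 : Filter.Tendsto (fun y => lam * φ y + f1 y + f3 y) (nhdsWithin x (Ioo (0:ℝ) L))
        (nhds 0) := by
      refine Filter.Tendsto.congr' ?_ tendsto_const_nhds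
      filter_upwards [self_mem_nhdsWithin] with y hy
      exact (heq' y hy).symm
    exact tendsto_nhds_unique h1 h2
  -- the energy function
  set G : ℝ → ℝ := fun x => (φ x * (starRingEnd ℂ) (φ x)).re
      + 2 * (f2 x * (starRingEnd ℂ) (φ x)).re - (f1 x * (starRingEnd ℂ) (f1 x)).re with hG
  have hGder : ∀ x ∈ s, HasDerivWithinAt G 0 s x := by
    intro x hx
    have hφ := hder1 x hx
    have hφ1 := hder2 x hx
    have hφ2 := hder3 x hx
    have hcφ : HasDerivWithinAt (fun y => (starRingEnd ℂ) (φ y)) ((starRingEnd ℂ) (f1 x)) s x :=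
      hφ.star
    have hc1 : HasDerivWithinAt (fun y => (starRingEnd ℂ) (f1 y)) ((starRingEnd ℂ) (f2 x)) s x :=
      hφ1.star
    have hA : HasDerivWithinAt (fun y => φ y * (starRingEnd ℂ) (φ y))
        (f1 x * (starRingEnd ℂ) (φ x) + φ x * (starRingEnd ℂ) (f1 x)) s x := hφ.mul hcφ
    have hB : HasDerivWithinAt (fun y => f2 y * (starRingEnd ℂ) (φ y))
        (f3 x * (starRingEnd ℂ) (φ x) + f2 x * (starRingEnd ℂ) (f1 x)) s x := hφ2.mul hcφ
    have hC : HasDerivWithinAt (fun y => f1 y * (starRingEnd ℂ) (f1 y))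
        (f2 x * (starRingEnd ℂ) (f1 x) + f1 x * (starRingEnd ℂ) (f2 x)) s x := hφ1.mul hc1
    have hAre := Complex.reCLM.hasFDerivAt.comp_hasDerivWithinAt x hA
    have hBre := Complex.reCLM.hasFDerivAt.comp_hasDerivWithinAt x hB
    have hCre := Complex.reCLM.hasFDerivAt.comp_hasDerivWithinAt x hC
    have hGd := ((hAre.add (hBre.const_mul (2:ℝ))).sub hCre)
    have key : (Complex.reCLM (f1 x * (starRingEnd ℂ) (φ x) + φ x * (starRingEnd ℂ) (f1 x))
        + 2 * Complex.reCLM (f3 x * (starRingEnd ℂ) (φ x) + f2 x * (starRingEnd ℂ) (f1 x))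
        - Complex.reCLM (f2 x * (starRingEnd ℂ) (f1 x) + f1 x * (starRingEnd ℂ) (f2 x))) = 0 := by
      have hode : f1 x + f3 x = -(lam * φ x) := by
        have := heqs x hx
        linear_combination this
      simp only [Complex.reCLM_apply, Complex.add_re]
      have h1 : (f1 x * (starRingEnd ℂ) (φ x)).re = (φ x * (starRingEnd ℂ) (f1 x)).re := by
        rw [show φ x * (starRingEnd ℂ) (f1 x)
            = (starRingEnd ℂ) (f1 x * (starRingEnd ℂ) (φ x)) by simp [mul_comm]]
        rw [Complex.conj_re]
      have h2 : (f2 x * (starRingEnd ℂ) (f1 x)).re = (f1 x * (starRingEnd ℂ) (f2 x)).re := by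
        rw [show f1 x * (starRingEnd ℂ) (f2 x)
            = (starRingEnd ℂ) (f2 x * (starRingEnd ℂ) (f1 x)) by simp [mul_comm]]
        rw [Complex.conj_re]
      have h3 : ((f1 x + f3 x) * (starRingEnd ℂ) (φ x)).re = -(lam * (φ x * (starRingEnd ℂ) (φ x))).re := by
        rw [hode]; simp [mul_assoc]
      have h4 : (lam * (φ x * (starRingEnd ℂ) (φ x))).re = 0 := by
        rw [Complex.mul_re, Complex.mul_conj]
        simp [hre]
      have h5 : ((f1 x + f3 x) * (starRingEnd ℂ) (φ x)).re = 0 := by rw [h3, h4]; ring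
      rw [add_mul, Complex.add_re] at h5
      rw [h1, h2]
      linarith
    rw [show (0:ℝ) = (Complex.reCLM (f1 x * (starRingEnd ℂ) (φ x) + φ x * (starRingEnd ℂ) (f1 x))
        + 2 * Complex.reCLM (f3 x * (starRingEnd ℂ) (φ x) + f2 x * (starRingEnd ℂ) (f1 x))
        - Complex.reCLM (f2 x * (starRingEnd ℂ) (f1 x) + f1 x * (starRingEnd ℂ) (f2 x)))
      from key.symm]
    exact hGd
  -- G is constant on [0, L]
  have hGdiff : DifferentiableOn ℝ G s := fun x hx => (hGder x hx).differentiableWithinAt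
  have hGderiv0 : ∀ x ∈ Ico (0:ℝ) L, derivWithin G s x = 0 := by
    intro x hx
    exact (hGder x (Ico_subset_Icc_self hx)).derivWithin (hs x (Ico_subset_Icc_self hx))
  have hconst := constant_of_derivWithin_zero hGdiff hGderiv0
  have hGL : G L = G 0 := hconst L (right_mem_Icc.2 hL.le)
  -- evaluate at the endpoints
  have hf1L : f1 L = 0 := by
    rw [hf1, iteratedDerivWithin_one]
    exact hdL
  have hf10 : f1 0 = derivWithin φ s 0 := by
    rw [hf1, iteratedDerivWithin_one]
  have hGLval : G L = 0 := by
    simp [hG, hLval, hf1L]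
  have hG0val : G 0 = -(f1 0 * (starRingEnd ℂ) (f1 0)).re := by
    simp [hG, h0]
  have : (f1 0 * (starRingEnd ℂ) (f1 0)).re = 0 := by
    rw [hGLval, hG0val] at hGL
    linarith
  rw [Complex.mul_conj] at this
  have : Complex.normSq (f1 0) = 0 := by
    rwa [Complex.ofReal_re] at this
  have hf1z : f1 0 = 0 := Complex.normSq_eq_zero.1 this
  rw [← hf10]; exact hf1z
end

section
/- Let L = 2π. If λ ∈ ℂ is purely imaginary (Re λ = 0) and φ ∈ H³((0,L);ℂ) is not identically zero and satisfies λφ + φ′ + φ‴ = 0 on (0,L) together with φ(0) = φ(L) = φ′(L) = 0, then λ = 0 and there exists a ∈ ℂ, a ≠ 0, such that φ(x) = a(1 − cos x) for all x ∈ [0,2π]. In particular, the kernel of the linear KdV operator A at L = 2π is exactly {a(1 − cos x) : a ∈ ℝ}. -/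
open Set Real Topology Filter


lemma kdv_aux_int (m n : ℤ) (x : ℝ) (h1 : 3*x + m + n = 0)
    (h2 : x*(x+m) + x*(x+n) + (x+m)*(x+n) = -1) : x*(x+m)*(x+n) = 0 := by
  have key : (m+n)^2 = 3*(m*n) + 3 := by
    have : ((m+n : ℤ) : ℝ)^2 = ((3*(m*n)+3 : ℤ) : ℝ) := by
      push_cast
      linear_combination (3*x + (m:ℝ) + n) * h1 - 3*h2
    exact_mod_cast this
  have hn2 : n^2 ≤ 4 := by nlinarith [sq_nonneg (2*m - n)]
  have hm2 : m^2 ≤ 4 := by nlinarith [sq_nonneg (2*n - m)]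
  have hm' : -2 ≤ m ∧ m ≤ 2 := by constructor <;> nlinarith
  have hn' : -2 ≤ n ∧ n ≤ 2 := by constructor <;> nlinarith
  obtain ⟨hma, hmb⟩ := hm'; obtain ⟨hna, hnb⟩ := hn'
  have key' : (m+n)*(m+n) = 3*(m*n) + 3 := by linear_combination key
  have hcase : (m = 1 ∧ n = 2) ∨ (m = 2 ∧ n = 1) ∨ (m = -1 ∧ n = -2) ∨ (m = -2 ∧ n = -1)
      ∨ (m = 1 ∧ n = -1) ∨ (m = -1 ∧ n = 1) := by
    interval_cases m <;> interval_cases n <;> omega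
  rcases hcase with ⟨rfl, rfl⟩|⟨rfl, rfl⟩|⟨rfl, rfl⟩|⟨rfl, rfl⟩|⟨rfl, rfl⟩|⟨rfl, rfl⟩
  · have hx : x = -1 := by push_cast at h1; linarith
    subst hx; norm_num
  · have hx : x = -1 := by push_cast at h1; linarith
    subst hx; norm_num
  · have hx : x = 1 := by push_cast at h1; linarith
    subst hx; norm_num
  · have hx : x = 1 := by push_cast at h1; linarith
    subst hx; norm_num
  · have hx : x = 0 := by push_cast at h1; linarith
    subst hx; norm_num
  · have hx : x = 0 := by push_cast at h1; linarith
    subst hx; norm_num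

lemma kdv_exists_cubic_root (μ : ℂ) : ∃ z : ℂ, z^3 - z - μ = 0 := by
  obtain ⟨z, hz⟩ := Complex.exists_root (f := Polynomial.X^3 - Polynomial.X - Polynomial.C μ)
    (by
      have h3 : (Polynomial.X^3 - Polynomial.X - Polynomial.C μ : Polynomial ℂ).degree = 3 := by
        compute_degree!
      rw [h3]; norm_num)
  refine ⟨z, ?_⟩
  simpa [Polynomial.IsRoot] using hz

lemma kdv_exists_quad_root (b c : ℂ) : ∃ z : ℂ, z^2 + b*z + c = 0 := by
  obtain ⟨z, hz⟩ := Complex.exists_root (f := Polynomial.X^2 + Polynomial.C b * Polynomial.X + Polynomial.C c)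
    (by
      have h2 : (Polynomial.X^2 + Polynomial.C b * Polynomial.X + Polynomial.C c : Polynomial ℂ).degree = 2 := by
        compute_degree!
      rw [h2]; norm_num)
  refine ⟨z, ?_⟩
  simpa [Polynomial.IsRoot] using hz

lemma kdv_eqOn_Icc_of_eqOn_Ioo {L : ℝ} (hL : 0 < L) {f g : ℝ → ℂ}
    (hf : ContinuousOn f (Icc 0 L)) (hg : ContinuousOn g (Icc 0 L))
    (h : EqOn f g (Ioo 0 L)) : EqOn f g (Icc 0 L) := by
  intro x hx
  have hsub : Icc (0:ℝ) L ⊆ closure (Ioo 0 L) := by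
    rw [closure_Ioo hL.ne]
  have hne : (𝓝[Ioo (0:ℝ) L] x).NeBot := mem_closure_iff_nhdsWithin_neBot.mp (hsub hx)
  have h1 : Filter.Tendsto f (𝓝[Ioo (0:ℝ) L] x) (𝓝 (f x)) :=
    ((hf x hx).mono Ioo_subset_Icc_self).tendsto
  have h2 : Filter.Tendsto g (𝓝[Ioo (0:ℝ) L] x) (𝓝 (g x)) :=
    ((hg x hx).mono Ioo_subset_Icc_self).tendsto
  have h1' : Filter.Tendsto g (𝓝[Ioo (0:ℝ) L] x) (𝓝 (f x)) :=
    h1.congr' (Filter.eventuallyEq_of_mem self_mem_nhdsWithin fun y hy => h hy)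
  exact tendsto_nhds_unique h1' h2

/-- at the critical length `L = 2π`, any purely imaginary eigenvalue of
the linear KdV operator `A φ = −φ′ − φ‴` with domain
`{φ ∈ H³((0,2π);ℂ) : φ(0) = φ(2π) = φ′(2π) = 0}` is `0`, and the corresponding
eigenfunction is a nonzero multiple of `1 − cos x`.  In particular the kernel of `A`
at `L = 2π` is exactly `{a(1 − cos x) : a}`. -/
theorem kdv_kernel_at_critical_length (lam : ℂ) (hre : lam.re = 0) (φ : ℝ → ℂ)
    (hreg : ContDiffOn ℝ 3 φ (Icc (0:ℝ) (2 * Real.pi)))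
    (hne : ∃ x ∈ Icc (0:ℝ) (2 * Real.pi), φ x ≠ 0)
    (heq : ∀ x ∈ Ioo (0:ℝ) (2 * Real.pi),
      lam * φ x + derivWithin φ (Icc (0:ℝ) (2 * Real.pi)) x
        + iteratedDerivWithin 3 φ (Icc (0:ℝ) (2 * Real.pi)) x = 0)
    (h0 : φ 0 = 0) (hLval : φ (2 * Real.pi) = 0)
    (hdL : derivWithin φ (Icc (0:ℝ) (2 * Real.pi)) (2 * Real.pi) = 0) :
    lam = 0 ∧ ∃ a : ℂ, a ≠ 0 ∧
      ∀ x ∈ Icc (0:ℝ) (2 * Real.pi), φ x = a * (1 - Complex.cos (x : ℂ)) := by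
  have pi_pos := Real.pi_pos
  have h2π : (0:ℝ) < 2 * Real.pi := by positivity
  set s : Set ℝ := Icc (0:ℝ) (2 * Real.pi) with hs_def
  have husd : UniqueDiffOn ℝ s := uniqueDiffOn_Icc h2π
  set φ₁ : ℝ → ℂ := derivWithin φ s with hφ₁def
  set φ₂ : ℝ → ℂ := derivWithin φ₁ s with hφ₂def
  set φ₃ : ℝ → ℂ := derivWithin φ₂ s with hφ₃def
  -- regularity
  have hC1 : ContDiffOn ℝ 2 φ₁ s := hreg.derivWithin husd (by norm_num)
  have hC2 : ContDiffOn ℝ 1 φ₂ s := hC1.derivWithin husd (by norm_num)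
  have hC3 : ContDiffOn ℝ 0 φ₃ s := hC2.derivWithin husd (by norm_num)
  have hcφ : ContinuousOn φ s := hreg.continuousOn
  have hcφ₁ : ContinuousOn φ₁ s := hC1.continuousOn
  have hcφ₂ : ContinuousOn φ₂ s := hC2.continuousOn
  have hcφ₃ : ContinuousOn φ₃ s := hC3.continuousOn
  have hd0 : ∀ x ∈ s, HasDerivWithinAt φ (φ₁ x) s x := fun x hx =>
    ((hreg.differentiableOn (by norm_num)) x hx).hasDerivWithinAt
  have hd1 : ∀ x ∈ s, HasDerivWithinAt φ₁ (φ₂ x) s x := fun x hx =>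
    ((hC1.differentiableOn (by norm_num)) x hx).hasDerivWithinAt
  have hd2 : ∀ x ∈ s, HasDerivWithinAt φ₂ (φ₃ x) s x := fun x hx =>
    ((hC2.differentiableOn one_ne_zero) x hx).hasDerivWithinAt
  have hIoo : Ioo (0:ℝ) (2 * Real.pi) ⊆ s := Ioo_subset_Icc_self
  have hmem : ∀ x ∈ Ioo (0:ℝ) (2 * Real.pi), s ∈ 𝓝 x := fun x hx => Icc_mem_nhds hx.1 hx.2
  have hd0' : ∀ x ∈ Ioo (0:ℝ) (2 * Real.pi), HasDerivAt φ (φ₁ x) x := fun x hx =>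
    (hd0 x (hIoo hx)).hasDerivAt (hmem x hx)
  have hd1' : ∀ x ∈ Ioo (0:ℝ) (2 * Real.pi), HasDerivAt φ₁ (φ₂ x) x := fun x hx =>
    (hd1 x (hIoo hx)).hasDerivAt (hmem x hx)
  have hd2' : ∀ x ∈ Ioo (0:ℝ) (2 * Real.pi), HasDerivAt φ₂ (φ₃ x) x := fun x hx =>
    (hd2 x (hIoo hx)).hasDerivAt (hmem x hx)
  -- identify iterated derivatives
  have E1 : EqOn (iteratedDerivWithin 1 φ s) φ₁ s := fun x hx => congrFun iteratedDerivWithin_one x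
  have E2 : EqOn (iteratedDerivWithin 2 φ s) φ₂ s := fun x hx => by
    rw [show (2:ℕ) = 1 + 1 from rfl, iteratedDerivWithin_succ]
    exact derivWithin_congr E1 (E1 hx)
  have E3 : ∀ x ∈ s, iteratedDerivWithin 3 φ s x = φ₃ x := fun x hx => by
    rw [show (3:ℕ) = 2 + 1 from rfl, iteratedDerivWithin_succ]
    exact derivWithin_congr E2 (E2 hx)
  -- the ODE on the open interval and its closed extension
  have hODEIoo : ∀ x ∈ Ioo (0:ℝ) (2 * Real.pi), φ₃ x = -(lam * φ x) - φ₁ x := by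
    intro x hx
    have h := heq x hx
    rw [E3 x (hIoo hx)] at h
    linear_combination h
  have hODE : ∀ x ∈ s, φ₃ x = -(lam * φ x) - φ₁ x := by
    have := kdv_eqOn_Icc_of_eqOn_Ioo h2π (f := φ₃) (g := fun x => -(lam * φ x) - φ₁ x)
      hcφ₃ (by fun_prop) (fun x hx => hODEIoo x hx)
    exact fun x hx => this hx
  -- conjugation fact
  have hsl : star lam = -lam := by
    rw [Complex.star_def]
    apply Complex.ext <;> simp [hre]
  -- energy identity : φ₁ 0 = 0
  have hc0 : φ₁ 0 = 0 := by
    set V : ℝ → ℂ := fun y => φ₂ y * star (φ y) + φ y * star (φ₂ y)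
      - φ₁ y * star (φ₁ y) + φ y * star (φ y) with hVdef
    have hVcont : ContinuousOn V s := by
      apply ContinuousOn.add
      apply ContinuousOn.sub
      apply ContinuousOn.add
      · exact hcφ₂.mul hcφ.star
      · exact hcφ.mul hcφ₂.star
      · exact hcφ₁.mul hcφ₁.star
      · exact hcφ.mul hcφ.star
    have hVd : ∀ y ∈ Ioo (0:ℝ) (2 * Real.pi), HasDerivAt V 0 y := by
      intro y hy
      have H0 := hd0' y hy; have H1 := hd1' y hy; have H2 := hd2' y hy
      have h := (((H2.mul H0.star).add (H0.mul H2.star)).sub (H1.mul H1.star)).add (H0.mul H0.star)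
      refine h.congr_deriv (Eq.symm ?_)
      rw [hODEIoo y hy]
      simp only [star_add, star_sub, star_neg, star_mul', hsl]
      ring
    have hFTC := intervalIntegral.integral_eq_sub_of_hasDerivAt_of_le (f := V)
      (f' := fun _ => (0:ℂ)) h2π.le hVcont hVd intervalIntegrable_const
    simp only [intervalIntegral.integral_zero] at hFTC
    have hV0 : V 0 = - (φ₁ 0 * star (φ₁ 0)) := by simp [hVdef, h0]
    have hVL : V (2 * Real.pi) = 0 := by simp [hVdef, hLval, hdL]
    have hz : φ₁ 0 * star (φ₁ 0) = 0 := by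
      rw [hVL, hV0] at hFTC
      linear_combination -hFTC
    rw [Complex.star_def, Complex.mul_conj] at hz
    have : Complex.normSq (φ₁ 0) = 0 := by exact_mod_cast hz
    exact Complex.normSq_eq_zero.mp this
  -- lambda is i * mu
  set μ : ℝ := lam.im with hμdef
  have hlam : lam = Complex.I * (μ:ℂ) := by
    apply Complex.ext <;> simp [hre, hμdef]
  set a : ℂ := φ₂ 0 with hadef
  set b : ℂ := φ₂ (2 * Real.pi) with hbdef
  -- key identity at roots of the characteristic polynomial
  have key : ∀ r : ℂ, r^3 - r - (μ:ℂ) = 0 →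
      a = b * Complex.exp (-(Complex.I*r) * ((2 * Real.pi : ℝ) : ℂ)) := by
    intro r hr
    set E : ℝ → ℂ := fun y => Complex.exp (-(Complex.I*r) * (y:ℂ)) with hEdef
    have hEc : Continuous E := by fun_prop
    have hEd : ∀ y : ℝ, HasDerivAt E (-(Complex.I*r) * E y) y := by
      intro y
      have h1 : HasDerivAt (fun z : ℂ => -(Complex.I*r) * z) (-(Complex.I*r)) (y:ℂ) := by
        simpa using (hasDerivAt_id ((y:ℝ):ℂ)).const_mul (-(Complex.I*r))
      have h3 := h1.cexp.comp_ofReal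
      simpa [hEdef, mul_comm] using h3
    set G : ℝ → ℂ := fun y => (φ₂ y + (Complex.I*r) * φ₁ y + (1 - r^2) * φ y) * E y with hGdef
    have hGc : ContinuousOn G s :=
      ((hcφ₂.add (continuousOn_const.mul hcφ₁)).add (continuousOn_const.mul hcφ)).mul
        hEc.continuousOn
    have hGd : ∀ y ∈ Ioo (0:ℝ) (2 * Real.pi), HasDerivAt G 0 y := by
      intro y hy
      have hin : HasDerivAt (fun t => φ₂ t + (Complex.I*r) * φ₁ t + (1 - r^2) * φ t)
          (φ₃ y + (Complex.I*r) * φ₂ y + (1 - r^2) * φ₁ y) y :=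
        ((hd2' y hy).add ((hd1' y hy).const_mul _)).add ((hd0' y hy).const_mul _)
      have h := hin.mul (hEd y)
      refine h.congr_deriv (Eq.symm ?_)
      rw [hODEIoo y hy, hlam]
      linear_combination (-(Complex.I) * E y * φ y) * hr + (r^2 * E y * φ₁ y) * Complex.I_sq
    have hFTC := intervalIntegral.integral_eq_sub_of_hasDerivAt_of_le (f := G)
      (f' := fun _ => (0:ℂ)) h2π.le hGc hGd intervalIntegrable_const
    simp only [intervalIntegral.integral_zero] at hFTC
    have hG0 : G 0 = a := by simp [hGdef, hEdef, h0, hc0, hadef]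
    have hGL : G (2 * Real.pi) = b * E (2 * Real.pi) := by simp [hGdef, hLval, hdL, hbdef]
    rw [hG0, hGL] at hFTC
    rw [hEdef] at hFTC
    linear_combination hFTC
  -- the first-order system
  set v : ℝ → (ℂ × ℂ × ℂ) → (ℂ × ℂ × ℂ) :=
    fun _ p => (p.2.1, p.2.2, -(lam * p.1) - p.2.1) with hvdef
  have hv : ∀ t, LipschitzWith (1 + ‖lam‖₊) (v t) := by
    intro t
    apply LipschitzWith.of_dist_le_mul
    intro p q
    have hK : ((1 + ‖lam‖₊ : NNReal) : ℝ) = 1 + ‖lam‖ := by push_cast; rfl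
    have hd : (0:ℝ) ≤ dist p q := dist_nonneg
    have h1 : dist p.1 q.1 ≤ dist p q := by rw [Prod.dist_eq]; exact le_max_left _ _
    have h2 : dist p.2 q.2 ≤ dist p q := by rw [Prod.dist_eq]; exact le_max_right _ _
    have h21 : dist p.2.1 q.2.1 ≤ dist p q :=
      le_trans (by rw [Prod.dist_eq (x := p.2)]; exact le_max_left _ _) h2
    have h22 : dist p.2.2 q.2.2 ≤ dist p q :=
      le_trans (by rw [Prod.dist_eq (x := p.2)]; exact le_max_right _ _) h2
    rw [hvdef, hK]
    have hnl : (0:ℝ) ≤ ‖lam‖ := norm_nonneg _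
    set D := dist p q with hD
    simp only [Prod.dist_eq]
    apply max_le
    · nlinarith
    apply max_le
    · nlinarith
    · have hrw : (-(lam * p.1) - p.2.1) - (-(lam * q.1) - q.2.1)
          = lam * (q.1 - p.1) + (q.2.1 - p.2.1) := by ring
      rw [dist_eq_norm, hrw]
      calc ‖lam * (q.1 - p.1) + (q.2.1 - p.2.1)‖
          ≤ ‖lam * (q.1 - p.1)‖ + ‖q.2.1 - p.2.1‖ := norm_add_le _ _
        _ = ‖lam‖ * ‖q.1 - p.1‖ + ‖q.2.1 - p.2.1‖ := by rw [norm_mul]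
        _ ≤ ‖lam‖ * dist p q + dist p q := by
            have e1 : ‖q.1 - p.1‖ = dist p.1 q.1 := by rw [dist_comm, dist_eq_norm]
            have e2 : ‖q.2.1 - p.2.1‖ = dist p.2.1 q.2.1 := by rw [dist_comm, dist_eq_norm]
            rw [e1, e2]
            have := mul_le_mul_of_nonneg_left h1 hnl
            nlinarith
        _ ≤ (1 + ‖lam‖) * D := by nlinarith
  set F : ℝ → ℂ × ℂ × ℂ := fun t => (φ t, φ₁ t, φ₂ t) with hFdef
  have hFc : ContinuousOn F s := hcφ.prodMk (hcφ₁.prodMk hcφ₂)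
  have hF' : ∀ t ∈ Ico (0:ℝ) (2 * Real.pi), HasDerivWithinAt F (v t (F t)) (Ici t) t := by
    intro t ht
    have hts' : t ∈ s := ⟨ht.1, ht.2.le⟩
    have hts : s ∈ 𝓝[Ici t] t := by
      rw [mem_nhdsWithin]
      refine ⟨Iio (2 * Real.pi), isOpen_Iio, ht.2, fun u hu => ?_⟩
      exact ⟨le_trans ht.1 hu.2, le_of_lt hu.1⟩
    have H : HasDerivWithinAt F (φ₁ t, φ₂ t, φ₃ t) s t :=
      (hd0 t hts').prodMk ((hd1 t hts').prodMk (hd2 t hts'))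
    have H' := H.mono_of_mem_nhdsWithin hts
    rw [hODE t hts'] at H'
    exact H'
  -- nontriviality : a ≠ 0
  have hane : a ≠ 0 := by
    intro ha0
    have hzero : EqOn F (fun _ => ((0:ℂ), (0:ℂ), (0:ℂ))) s := by
      apply ODE_solution_unique hv hFc hF'
      · exact continuousOn_const
      · intro t ht
        have : v t ((0:ℂ), (0:ℂ), (0:ℂ)) = ((0:ℂ), (0:ℂ), (0:ℂ)) := by
          rw [hvdef]; simp
        rw [this]
        exact hasDerivWithinAt_const t _ _
      · rw [hFdef]
        simp only
        rw [h0, hc0, ← hadef, ha0]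
    obtain ⟨x, hx, hφx⟩ := hne
    have := congrArg Prod.fst (hzero hx)
    exact hφx this
  -- roots
  obtain ⟨r₁, hr₁⟩ := kdv_exists_cubic_root (μ:ℂ)
  obtain ⟨r₂, hr₂q⟩ := kdv_exists_quad_root r₁ (r₁^2 - 1)
  set r₃ : ℂ := -r₁ - r₂ with hr₃def
  have hr₂ : r₂^3 - r₂ - (μ:ℂ) = 0 := by linear_combination (r₂ - r₁) * hr₂q + hr₁
  have hr₃q : r₃^2 + r₁*r₃ + (r₁^2 - 1) = 0 := by rw [hr₃def]; linear_combination hr₂q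
  have hr₃ : r₃^3 - r₃ - (μ:ℂ) = 0 := by linear_combination (r₃ - r₁) * hr₃q + hr₁
  have hbne : b ≠ 0 := by
    intro hb
    exact hane (by simpa [hb] using key r₁ hr₁)
  -- any two roots differ by an integer
  have hdiff : ∀ r r' : ℂ, r^3 - r - (μ:ℂ) = 0 → r'^3 - r'-(μ:ℂ) = 0 → ∃ k : ℤ, r' - r = (k:ℂ) := by
    intro r r' hr hr'
    have e1 := key r hr
    have e2 := key r' hr'
    have hexp : Complex.exp (-(Complex.I*r) * ((2 * Real.pi : ℝ) : ℂ))
        = Complex.exp (-(Complex.I*r') * ((2 * Real.pi : ℝ) : ℂ)) :=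
      mul_left_cancel₀ hbne (e1.symm.trans e2)
    rw [Complex.exp_eq_exp_iff_exists_int] at hexp
    obtain ⟨n, hn⟩ := hexp
    refine ⟨n, ?_⟩
    have h2I : ((2:ℂ) * (Real.pi:ℂ)) * Complex.I ≠ 0 := by
      simp [Real.pi_ne_zero, Complex.I_ne_zero]
    apply mul_left_cancel₀ h2I
    push_cast at hn ⊢
    linear_combination hn
  -- all roots are real
  have hreal : ∀ r : ℂ, r^3 - r - (μ:ℂ) = 0 → r.im = 0 := by
    intro r hr
    have hcr : (starRingEnd ℂ r)^3 - starRingEnd ℂ r - (μ:ℂ) = 0 := by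
      have := congrArg (starRingEnd ℂ) hr
      simpa [map_sub, map_pow, Complex.conj_ofReal] using this
    obtain ⟨k, hk⟩ := hdiff r (starRingEnd ℂ r) hr hcr
    have := congrArg Complex.im hk
    simp [Complex.sub_im, Complex.conj_im] at this
    linarith
  -- mu = 0
  have hμ0 : μ = 0 := by
    obtain ⟨m, hm⟩ := hdiff r₁ r₂ hr₁ hr₂
    obtain ⟨n, hn⟩ := hdiff r₁ r₃ hr₁ hr₃
    set x : ℝ := r₁.re with hxdef
    have hr1x : r₁ = (x:ℂ) := Complex.ext rfl (by simp [hreal r₁ hr₁])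
    have hm' : r₂ = ((x + m : ℝ) : ℂ) := by rw [← sub_add_cancel r₂ r₁, hm, hr1x]; push_cast; ring
    have hn' : r₃ = ((x + n : ℝ) : ℂ) := by rw [← sub_add_cancel r₃ r₁, hn, hr1x]; push_cast; ring
    -- sum of roots is zero
    have hsum : (3*x + m + n : ℝ) = 0 := by
      have : r₁ + r₂ + r₃ = 0 := by rw [hr₃def]; ring
      rw [hr1x, hm', hn'] at this
      exact_mod_cast (by push_cast at this ⊢; linear_combination this : ((3*x + m + n : ℝ):ℂ) = ((0:ℝ):ℂ))
    -- second symmetric function is -1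
    have he2 : (x*(x+m) + x*(x+n) + (x+m)*(x+n) : ℝ) = -1 := by
      have : r₁*r₂ + r₁*r₃ + r₂*r₃ = -1 := by rw [hr₃def]; linear_combination -hr₂q
      rw [hr1x, hm', hn'] at this
      exact_mod_cast (by push_cast at this ⊢; linear_combination this :
        ((x*(x+m) + x*(x+n) + (x+m)*(x+n) : ℝ):ℂ) = ((-1:ℝ):ℂ))
    -- product of roots is μ
    have hprod : ((x*(x+m)*(x+n) : ℝ):ℂ) = (μ:ℂ) := by
      have : r₁*r₂*r₃ = (μ:ℂ) := by rw [hr₃def]; linear_combination (-r₁) * hr₂q + hr₁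
      rw [hr1x, hm', hn'] at this
      push_cast at this ⊢
      linear_combination this
    have hz := kdv_aux_int m n x hsum he2
    have : ((0:ℝ):ℂ) = (μ:ℂ) := by rw [← hprod, hz]
    exact_mod_cast this.symm
  have hlam0 : lam = 0 := by rw [hlam, hμ0]; simp
  refine ⟨hlam0, a, hane, ?_⟩
  set g : ℝ → ℂ × ℂ × ℂ :=
    fun y => (a - a * Complex.cos (y:ℂ), a * Complex.sin (y:ℂ), a * Complex.cos (y:ℂ)) with hgdef
  have hgc : ContinuousOn g s := by
    apply ContinuousOn.prodMk
    · fun_prop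
    apply ContinuousOn.prodMk <;> fun_prop
  have hg' : ∀ t ∈ Ico (0:ℝ) (2 * Real.pi), HasDerivWithinAt g (v t (g t)) (Ici t) t := by
    intro t ht
    have hcos : HasDerivAt (fun y:ℝ => Complex.cos (y:ℂ)) (-Complex.sin (t:ℂ)) t :=
      (Complex.hasDerivAt_cos ((t:ℝ):ℂ)).comp_ofReal
    have hsin : HasDerivAt (fun y:ℝ => Complex.sin (y:ℂ)) (Complex.cos (t:ℂ)) t :=
      (Complex.hasDerivAt_sin ((t:ℝ):ℂ)).comp_ofReal
    have c1 : HasDerivAt (fun y:ℝ => a - a * Complex.cos (y:ℂ)) (a * Complex.sin (t:ℂ)) t := by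
      have := (hcos.const_mul a).const_sub a
      simpa [mul_neg] using this
    have c2 : HasDerivAt (fun y:ℝ => a * Complex.sin (y:ℂ)) (a * Complex.cos (t:ℂ)) t :=
      hsin.const_mul a
    have c3 : HasDerivAt (fun y:ℝ => a * Complex.cos (y:ℂ)) (-(a * Complex.sin (t:ℂ))) t := by
      have := hcos.const_mul a
      simpa [mul_neg] using this
    have H : HasDerivAt g (a * Complex.sin (t:ℂ), a * Complex.cos (t:ℂ),
        -(a * Complex.sin (t:ℂ))) t := c1.prodMk (c2.prodMk c3)
    have hval : v t (g t) = (a * Complex.sin (t:ℂ), a * Complex.cos (t:ℂ),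
        -(a * Complex.sin (t:ℂ))) := by
      rw [hvdef, hgdef]
      simp [hlam0]
    rw [hval]
    exact H.hasDerivWithinAt
  have hEq : EqOn F g s := by
    apply ODE_solution_unique hv hFc hF' hgc hg'
    rw [hFdef, hgdef]
    simp only
    rw [h0, hc0, ← hadef]
    norm_num
  intro x hx
  have := congrArg Prod.fst (hEq hx)
  rw [hFdef, hgdef] at this
  simp only at this
  rw [this]
  ring
end

section
/- Let φ(x) = (1 − cos x)/√(3π) and a(x) = 2/(27π) − (11/(108π)) cos x − (1/3) sin x + (x sin x)/(6π) + (1/(36π)) cos(2x), both on [0,2π]. Then a satisfies the third-order ODE a′(x) + a‴(x) + φ(x) φ′(x) = 0 for all x ∈ [0,2π], the boundary conditions a(0) = a(2π) = 0 and a′(2π) = 0, and the orthogonality relation ∫₀^{2π} a(x) φ(x) dx = 0. Moreover, a is the unique C³ function on [0,2π] satisfying these four conditions. -/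
open Set Real MeasureTheory

noncomputable def phiKdV (x : ℝ) : ℝ := (1 - Real.cos x) / Real.sqrt (3 * Real.pi)

noncomputable def aKdV (x : ℝ) : ℝ :=
  2 / (27 * Real.pi) - 11 / (108 * Real.pi) * Real.cos x - (1/3 : ℝ) * Real.sin x
    + x * Real.sin x / (6 * Real.pi) + 1 / (36 * Real.pi) * Real.cos (2 * x)

noncomputable def aK1 (x : ℝ) : ℝ :=
  11 / (108 * Real.pi) * Real.sin x - (1/3 : ℝ) * Real.cos x
    + (Real.sin x + x * Real.cos x) / (6 * Real.pi) - 1 / (18 * Real.pi) * Real.sin (2 * x)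

noncomputable def aK2 (x : ℝ) : ℝ :=
  11 / (108 * Real.pi) * Real.cos x + (1/3 : ℝ) * Real.sin x
    + (2 * Real.cos x - x * Real.sin x) / (6 * Real.pi) - 1 / (9 * Real.pi) * Real.cos (2 * x)

noncomputable def aK3 (x : ℝ) : ℝ :=
  -(11 / (108 * Real.pi)) * Real.sin x + (1/3 : ℝ) * Real.cos x
    + (-(3 * Real.sin x) - x * Real.cos x) / (6 * Real.pi) + 2 / (9 * Real.pi) * Real.sin (2 * x)

lemma hasDerivAt_cos2 (x : ℝ) :
    HasDerivAt (fun y : ℝ => Real.cos (2 * y)) (-(2 * Real.sin (2 * x))) x := by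
  have h := (Real.hasDerivAt_cos (2 * x)).comp x ((hasDerivAt_id x).const_mul 2)
  refine h.congr_deriv ?_
  ring

lemma hasDerivAt_sin2 (x : ℝ) :
    HasDerivAt (fun y : ℝ => Real.sin (2 * y)) (2 * Real.cos (2 * x)) x := by
  have h := (Real.hasDerivAt_sin (2 * x)).comp x ((hasDerivAt_id x).const_mul 2)
  refine h.congr_deriv ?_
  ring

lemma hasDerivAt_aKdV (x : ℝ) : HasDerivAt aKdV (aK1 x) x := by
  have h : HasDerivAt (fun y : ℝ =>
      2 / (27 * Real.pi) - 11 / (108 * Real.pi) * Real.cos y - (1/3 : ℝ) * Real.sin y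
        + y * Real.sin y / (6 * Real.pi) + 1 / (36 * Real.pi) * Real.cos (2 * y))
      (0 - 11 / (108 * Real.pi) * (-Real.sin x) - (1/3 : ℝ) * Real.cos x
        + (1 * Real.sin x + x * Real.cos x) / (6 * Real.pi)
        + 1 / (36 * Real.pi) * -(2 * Real.sin (2 * x))) x := by
    exact ((((hasDerivAt_const x _).sub ((Real.hasDerivAt_cos x).const_mul _)).sub
      ((Real.hasDerivAt_sin x).const_mul _)).add
      (((hasDerivAt_id x).mul (Real.hasDerivAt_sin x)).div_const _)).add
      ((hasDerivAt_cos2 x).const_mul _)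
  refine h.congr_deriv ?_
  unfold aK1; ring

lemma hasDerivAt_aK1 (x : ℝ) : HasDerivAt aK1 (aK2 x) x := by
  have h : HasDerivAt (fun y : ℝ =>
      11 / (108 * Real.pi) * Real.sin y - (1/3 : ℝ) * Real.cos y
        + (Real.sin y + y * Real.cos y) / (6 * Real.pi) - 1 / (18 * Real.pi) * Real.sin (2 * y))
      (11 / (108 * Real.pi) * Real.cos x - (1/3 : ℝ) * (-Real.sin x)
        + (Real.cos x + (1 * Real.cos x + x * (-Real.sin x))) / (6 * Real.pi)
        - 1 / (18 * Real.pi) * (2 * Real.cos (2 * x))) x := by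
    exact ((((Real.hasDerivAt_sin x).const_mul _).sub ((Real.hasDerivAt_cos x).const_mul _)).add
      (((Real.hasDerivAt_sin x).add ((hasDerivAt_id x).mul (Real.hasDerivAt_cos x))).div_const _)).sub
      ((hasDerivAt_sin2 x).const_mul _)
  refine h.congr_deriv ?_
  unfold aK2; ring

lemma hasDerivAt_aK2 (x : ℝ) : HasDerivAt aK2 (aK3 x) x := by
  have h : HasDerivAt (fun y : ℝ =>
      11 / (108 * Real.pi) * Real.cos y + (1/3 : ℝ) * Real.sin y
        + (2 * Real.cos y - y * Real.sin y) / (6 * Real.pi) - 1 / (9 * Real.pi) * Real.cos (2 * y))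
      (11 / (108 * Real.pi) * (-Real.sin x) + (1/3 : ℝ) * Real.cos x
        + (2 * (-Real.sin x) - (1 * Real.sin x + x * Real.cos x)) / (6 * Real.pi)
        - 1 / (9 * Real.pi) * -(2 * Real.sin (2 * x))) x := by
    exact ((((Real.hasDerivAt_cos x).const_mul _).add ((Real.hasDerivAt_sin x).const_mul _)).add
      ((((Real.hasDerivAt_cos x).const_mul 2).sub
        ((hasDerivAt_id x).mul (Real.hasDerivAt_sin x))).div_const _)).sub
      ((hasDerivAt_cos2 x).const_mul _)
  refine h.congr_deriv ?_
  unfold aK3; ring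

lemma hasDerivAt_phiKdV (x : ℝ) :
    HasDerivAt phiKdV (Real.sin x / Real.sqrt (3 * Real.pi)) x := by
  have h : HasDerivAt (fun y : ℝ => (1 - Real.cos y) / Real.sqrt (3 * Real.pi))
      ((0 - -Real.sin x) / Real.sqrt (3 * Real.pi)) x :=
    ((hasDerivAt_const x _).sub (Real.hasDerivAt_cos x)).div_const _
  refine h.congr_deriv ?_
  ring

lemma deriv_aKdV_eq : deriv aKdV = aK1 := funext fun x => (hasDerivAt_aKdV x).deriv
lemma deriv_aK1_eq : deriv aK1 = aK2 := funext fun x => (hasDerivAt_aK1 x).deriv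
lemma deriv_aK2_eq : deriv aK2 = aK3 := funext fun x => (hasDerivAt_aK2 x).deriv

lemma iteratedDeriv_three_aKdV (x : ℝ) : iteratedDeriv 3 aKdV x = aK3 x := by
  rw [show (3 : ℕ) = 2 + 1 from rfl, iteratedDeriv_succ, show (2 : ℕ) = 1 + 1 from rfl,
    iteratedDeriv_succ, iteratedDeriv_one, deriv_aKdV_eq, deriv_aK1_eq, deriv_aK2_eq]

lemma phi_mul_deriv (x : ℝ) :
    phiKdV x * deriv phiKdV x = (1 - Real.cos x) * Real.sin x / (3 * Real.pi) := by
  rw [(hasDerivAt_phiKdV x).deriv, phiKdV, div_mul_div_comm,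
    Real.mul_self_sqrt (by positivity)]

lemma ode_identity (x : ℝ) :
    aK1 x + aK3 x + (1 - Real.cos x) * Real.sin x / (3 * Real.pi) = 0 := by
  unfold aK1 aK3
  rw [Real.sin_two_mul]
  have hπ := Real.pi_ne_zero
  field_simp
  ring

lemma cos_four_pi' : Real.cos (2 * (2 * Real.pi)) = 1 := by
  rw [show (2 : ℝ) * (2 * Real.pi) = 2 * Real.pi + 2 * Real.pi by ring, Real.cos_add]
  simp

lemma sin_four_pi' : Real.sin (2 * (2 * Real.pi)) = 0 := by
  rw [show (2 : ℝ) * (2 * Real.pi) = 2 * Real.pi + 2 * Real.pi by ring, Real.sin_add]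
  simp

lemma aKdV_zero : aKdV 0 = 0 := by
  have hπ := Real.pi_ne_zero
  simp only [aKdV, Real.cos_zero, Real.sin_zero, mul_zero, zero_mul]
  field_simp
  ring

lemma aKdV_two_pi : aKdV (2 * Real.pi) = 0 := by
  have hπ := Real.pi_ne_zero
  simp only [aKdV, Real.cos_two_pi, Real.sin_two_pi, cos_four_pi', mul_zero, zero_mul]
  field_simp
  ring

lemma aK1_two_pi : aK1 (2 * Real.pi) = 0 := by
  have hπ := Real.pi_ne_zero
  simp only [aK1, Real.cos_two_pi, Real.sin_two_pi, sin_four_pi', mul_zero, zero_mul]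
  field_simp
  ring

noncomputable def FK (x : ℝ) : ℝ :=
  (1/3 : ℝ) * Real.cos x - 1 / (27 * Real.pi) * Real.sin x
    + 1 / (27 * Real.pi) * (Real.sin x * Real.cos x) + (1/6 : ℝ) * Real.sin x ^ 2
    + 1 / (54 * Real.pi) * Real.sin x ^ 3 + 1 / (12 * Real.pi) * x
    - 1 / (6 * Real.pi) * (x * Real.cos x) + 1 / (12 * Real.pi) * (x * Real.cos x ^ 2)

lemma hasDerivAt_FK (x : ℝ) : HasDerivAt FK (aKdV x * (1 - Real.cos x)) x := by
  have hs := Real.hasDerivAt_sin x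
  have hc := Real.hasDerivAt_cos x
  have hid := hasDerivAt_id x
  have h : HasDerivAt (fun y : ℝ =>
      (1/3 : ℝ) * Real.cos y - 1 / (27 * Real.pi) * Real.sin y
        + 1 / (27 * Real.pi) * (Real.sin y * Real.cos y) + (1/6 : ℝ) * Real.sin y ^ 2
        + 1 / (54 * Real.pi) * Real.sin y ^ 3 + 1 / (12 * Real.pi) * y
        - 1 / (6 * Real.pi) * (y * Real.cos y) + 1 / (12 * Real.pi) * (y * Real.cos y ^ 2))
      ((1/3 : ℝ) * (-Real.sin x) - 1 / (27 * Real.pi) * Real.cos x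
        + 1 / (27 * Real.pi) * (Real.cos x * Real.cos x + Real.sin x * (-Real.sin x))
        + (1/6 : ℝ) * (2 * Real.sin x ^ 1 * Real.cos x)
        + 1 / (54 * Real.pi) * (3 * Real.sin x ^ 2 * Real.cos x)
        + 1 / (12 * Real.pi) * 1
        - 1 / (6 * Real.pi) * (1 * Real.cos x + x * (-Real.sin x))
        + 1 / (12 * Real.pi) * (1 * Real.cos x ^ 2 + x * (2 * Real.cos x ^ 1 * (-Real.sin x)))) x := by
    exact (((((((hc.const_mul _).sub (hs.const_mul _)).add
      ((hs.mul hc).const_mul _)).add ((hs.pow 2).const_mul _)).add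
      ((hs.pow 3).const_mul _)).add (hid.const_mul _)).sub
      ((hid.mul hc).const_mul _)).add ((hid.mul (hc.pow 2)).const_mul _)
  have : HasDerivAt FK _ x := h
  convert this using 1
  rw [aKdV, Real.cos_two_mul]
  linear_combination (((1:ℝ)/27 - Real.cos x / 18) / Real.pi) * Real.sin_sq_add_cos_sq x

lemma FK_ends : FK (2 * Real.pi) - FK 0 = 0 := by
  have hπ := Real.pi_ne_zero
  simp only [FK, Real.cos_two_pi, Real.sin_two_pi, Real.cos_zero, Real.sin_zero]
  field_simp
  ring

lemma cont_aKdV : Continuous aKdV := by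
  unfold aKdV
  fun_prop

lemma integral_aKdV_phi : (∫ x in (0:ℝ)..(2 * Real.pi), aKdV x * phiKdV x) = 0 := by
  have h1 : ∀ x : ℝ, aKdV x * phiKdV x
      = aKdV x * (1 - Real.cos x) / Real.sqrt (3 * Real.pi) := fun x => by
    rw [phiKdV, mul_div_assoc]
  simp_rw [h1]
  rw [intervalIntegral.integral_div]
  have h2 : (∫ x in (0:ℝ)..(2 * Real.pi), aKdV x * (1 - Real.cos x)) = FK (2 * Real.pi) - FK 0 := by
    apply intervalIntegral.integral_eq_sub_of_hasDerivAt (fun x _ => hasDerivAt_FK x)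
    exact ((cont_aKdV.mul (continuous_const.sub Real.continuous_cos)).intervalIntegrable 0 (2 * Real.pi))
  rw [h2, FK_ends, zero_div]

lemma first_integral_aKdV (x : ℝ) :
    aK2 x + aKdV x + (1 - Real.cos x) ^ 2 / (6 * Real.pi) = 35 / (108 * Real.pi) := by
  unfold aK2 aKdV
  rw [Real.cos_two_mul]
  have hπ := Real.pi_ne_zero
  field_simp
  ring

noncomputable def GK (x : ℝ) : ℝ :=
  3 * x / 2 - 2 * Real.sin x + Real.sin x * Real.cos x / 2

lemma hasDerivAt_GK (x : ℝ) : HasDerivAt GK ((1 - Real.cos x) ^ 2) x := by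
  have h : HasDerivAt (fun y : ℝ => 3 * y / 2 - 2 * Real.sin y + Real.sin y * Real.cos y / 2)
      (3 * 1 / 2 - 2 * Real.cos x
        + (Real.cos x * Real.cos x + Real.sin x * (-Real.sin x)) / 2) x := by
    exact ((((hasDerivAt_id x).const_mul 3).div_const 2).sub
      ((Real.hasDerivAt_sin x).const_mul 2)).add
      (((Real.hasDerivAt_sin x).mul (Real.hasDerivAt_cos x)).div_const 2)
  have h2 : HasDerivAt GK _ x := h
  convert h2 using 1
  linear_combination ((1:ℝ)/2) * Real.sin_sq_add_cos_sq x

lemma integral_one_sub_cos_phi :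
    (∫ x in (0:ℝ)..(2 * Real.pi), (1 - Real.cos x) * phiKdV x)
      = 3 * Real.pi / Real.sqrt (3 * Real.pi) := by
  have h1 : ∀ x : ℝ, (1 - Real.cos x) * phiKdV x
      = (1 - Real.cos x) ^ 2 / Real.sqrt (3 * Real.pi) := fun x => by
    rw [phiKdV]; ring
  simp_rw [h1]
  rw [intervalIntegral.integral_div]
  have h2 : (∫ x in (0:ℝ)..(2 * Real.pi), (1 - Real.cos x) ^ 2) = GK (2 * Real.pi) - GK 0 := by
    apply intervalIntegral.integral_eq_sub_of_hasDerivAt (fun x _ => hasDerivAt_GK x)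
    exact (((continuous_const.sub Real.continuous_cos).pow 2).intervalIntegrable 0 (2 * Real.pi))
  rw [h2]
  simp [GK]
  ring

lemma sqrt3pi_ne : (3 : ℝ) * Real.pi / Real.sqrt (3 * Real.pi) ≠ 0 := by
  have h1 : (0:ℝ) < 3 * Real.pi := by positivity
  have h2 : 0 < Real.sqrt (3 * Real.pi) := Real.sqrt_pos.mpr h1
  positivity

/-- `a` satisfies `a′ + a‴ + φ φ′ = 0` on `[0,2π]`, the boundary
conditions `a(0) = a(2π) = 0`, `a′(2π) = 0`, and `∫₀^{2π} a φ dx = 0`; moreover `a`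
is the unique `C³` function on `[0,2π]` with these four properties. -/
theorem center_manifold_coefficient :
    (∀ x ∈ Icc (0:ℝ) (2 * Real.pi),
      deriv aKdV x + iteratedDeriv 3 aKdV x + phiKdV x * deriv phiKdV x = 0) ∧
    aKdV 0 = 0 ∧ aKdV (2 * Real.pi) = 0 ∧ deriv aKdV (2 * Real.pi) = 0 ∧
    (∫ x in (0:ℝ)..(2 * Real.pi), aKdV x * phiKdV x) = 0 ∧
    (∀ b : ℝ → ℝ, ContDiffOn ℝ 3 b (Icc (0:ℝ) (2 * Real.pi)) →
      (∀ x ∈ Icc (0:ℝ) (2 * Real.pi),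
        derivWithin b (Icc (0:ℝ) (2 * Real.pi)) x
          + iteratedDerivWithin 3 b (Icc (0:ℝ) (2 * Real.pi)) x
          + phiKdV x * deriv phiKdV x = 0) →
      b 0 = 0 → b (2 * Real.pi) = 0 →
      derivWithin b (Icc (0:ℝ) (2 * Real.pi)) (2 * Real.pi) = 0 →
      (∫ x in (0:ℝ)..(2 * Real.pi), b x * phiKdV x) = 0 →
      ∀ x ∈ Icc (0:ℝ) (2 * Real.pi), b x = aKdV x) := by
  have h2π : (0:ℝ) < 2 * Real.pi := by positivity
  have hS : UniqueDiffOn ℝ (Icc (0:ℝ) (2 * Real.pi)) := uniqueDiffOn_Icc h2π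
  have hmemL : (2 * Real.pi) ∈ Icc (0:ℝ) (2 * Real.pi) := ⟨le_of_lt h2π, le_refl _⟩
  refine ⟨?_, aKdV_zero, aKdV_two_pi, ?_, integral_aKdV_phi, ?_⟩
  · intro x _
    rw [deriv_aKdV_eq, iteratedDeriv_three_aKdV, phi_mul_deriv]
    exact ode_identity x
  · rw [deriv_aKdV_eq]; exact aK1_two_pi
  · intro b hb hODE hb0 hbL hb1L hOrth
    set b1 : ℝ → ℝ := derivWithin b (Icc (0:ℝ) (2 * Real.pi)) with hb1def
    set b2 : ℝ → ℝ := derivWithin b1 (Icc (0:ℝ) (2 * Real.pi)) with hb2def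
    have hdb : DifferentiableOn ℝ b (Icc (0:ℝ) (2 * Real.pi)) :=
      hb.differentiableOn (by norm_num)
    have hi1 : ∀ x ∈ Icc (0:ℝ) (2 * Real.pi),
        iteratedDerivWithin 1 b (Icc (0:ℝ) (2 * Real.pi)) x = b1 x := fun x hx =>
      congrFun iteratedDerivWithin_one x
    have hi2 : ∀ x ∈ Icc (0:ℝ) (2 * Real.pi),
        iteratedDerivWithin 2 b (Icc (0:ℝ) (2 * Real.pi)) x = b2 x := by
      intro x hx
      rw [show (2:ℕ) = 1 + 1 from rfl, iteratedDerivWithin_succ]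
      exact derivWithin_congr (fun y hy => hi1 y hy) (hi1 x hx)
    have hi3 : ∀ x ∈ Icc (0:ℝ) (2 * Real.pi),
        iteratedDerivWithin 3 b (Icc (0:ℝ) (2 * Real.pi)) x
          = derivWithin b2 (Icc (0:ℝ) (2 * Real.pi)) x := by
      intro x hx
      rw [show (3:ℕ) = 2 + 1 from rfl, iteratedDerivWithin_succ]
      exact derivWithin_congr (fun y hy => hi2 y hy) (hi2 x hx)
    have hdb1 : DifferentiableOn ℝ b1 (Icc (0:ℝ) (2 * Real.pi)) := by
      have h := hb.differentiableOn_iteratedDerivWithin (m := 1) (by norm_num) hS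
      exact h.congr fun x hx => (hi1 x hx).symm
    have hdb2 : DifferentiableOn ℝ b2 (Icc (0:ℝ) (2 * Real.pi)) := by
      have h := hb.differentiableOn_iteratedDerivWithin (m := 2) (by norm_num) hS
      exact h.congr fun x hx => (hi2 x hx).symm
    have hODE' : ∀ x ∈ Icc (0:ℝ) (2 * Real.pi),
        b1 x + derivWithin b2 (Icc (0:ℝ) (2 * Real.pi)) x
          = -((1 - Real.cos x) * Real.sin x / (3 * Real.pi)) := by
      intro x hx
      have h := hODE x hx
      rw [hi3 x hx, phi_mul_deriv] at h
      linarith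
    -- first integral
    set g : ℝ → ℝ := fun y => b y + b2 y + (1 - Real.cos y) ^ 2 / (6 * Real.pi) with hgdef
    have hq : ∀ x : ℝ, HasDerivAt (fun y : ℝ => (1 - Real.cos y) ^ 2 / (6 * Real.pi))
        ((1 - Real.cos x) * Real.sin x / (3 * Real.pi)) x := by
      intro x
      have h : HasDerivAt (fun y : ℝ => (1 - Real.cos y) ^ 2 / (6 * Real.pi))
          ((2 * (1 - Real.cos x) ^ 1 * (0 - -Real.sin x)) / (6 * Real.pi)) x :=
        (((hasDerivAt_const x 1).sub (Real.hasDerivAt_cos x)).pow 2).div_const _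
      convert h using 1
      ring
    have hg0 : ∀ x ∈ Icc (0:ℝ) (2 * Real.pi),
        derivWithin g (Icc (0:ℝ) (2 * Real.pi)) x = 0 := by
      intro x hx
      have h1 : HasDerivWithinAt b (b1 x) (Icc (0:ℝ) (2 * Real.pi)) x :=
        (hdb x hx).hasDerivWithinAt
      have h2 := (hdb2 x hx).hasDerivWithinAt
      have h : derivWithin (fun y => b y + b2 y + (1 - Real.cos y) ^ 2 / (6 * Real.pi))
          (Icc (0:ℝ) (2 * Real.pi)) x = _ :=
        ((h1.add h2).add (hq x).hasDerivWithinAt).derivWithin (hS x hx)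
      rw [hgdef, h]
      have := hODE' x hx
      linarith
    have hgdiff : DifferentiableOn ℝ g (Icc (0:ℝ) (2 * Real.pi)) := by
      refine (hdb.add hdb2).add (Differentiable.differentiableOn ?_)
      exact fun x => (hq x).differentiableAt
    have hgc : ∀ x ∈ Icc (0:ℝ) (2 * Real.pi), g x = g 0 :=
      constant_of_derivWithin_zero hgdiff fun x hx => hg0 x (Ico_subset_Icc_self hx)
    set C : ℝ := g 0 - 35 / (108 * Real.pi) with hCdef
    have hb2eq : ∀ x ∈ Icc (0:ℝ) (2 * Real.pi),
        b2 x = g 0 - b x - (1 - Real.cos x) ^ 2 / (6 * Real.pi) := by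
      intro x hx
      have := hgc x hx
      rw [hgdef] at this
      simp only at this
      linarith
    -- the function v
    set v : ℝ → ℝ := fun y => b y - (aKdV y + C - C * Real.cos y) with hvdef
    have hw : ∀ x : ℝ, HasDerivAt (fun y => aKdV y + C - C * Real.cos y)
        (aK1 x + C * Real.sin x) x := by
      intro x
      have h := ((hasDerivAt_aKdV x).add_const C).sub ((Real.hasDerivAt_cos x).const_mul C)
      refine h.congr_deriv ?_
      ring
    have hdv : DifferentiableOn ℝ v (Icc (0:ℝ) (2 * Real.pi)) :=
      hdb.sub (Differentiable.differentiableOn fun x => (hw x).differentiableAt)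
    have hv1 : ∀ x ∈ Icc (0:ℝ) (2 * Real.pi),
        derivWithin v (Icc (0:ℝ) (2 * Real.pi)) x = b1 x - (aK1 x + C * Real.sin x) := by
      intro x hx
      exact ((hdb x hx).hasDerivWithinAt.sub (hw x).hasDerivWithinAt).derivWithin (hS x hx)
    have hdv1 : DifferentiableOn ℝ (derivWithin v (Icc (0:ℝ) (2 * Real.pi)))
        (Icc (0:ℝ) (2 * Real.pi)) := by
      refine DifferentiableOn.congr
        (hdb1.sub (Differentiable.differentiableOn (f := fun y => aK1 y + C * Real.sin y) ?_))
        fun x hx => hv1 x hx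
      intro x
      exact ((hasDerivAt_aK1 x).add ((Real.hasDerivAt_sin x).const_mul C)).differentiableAt
    have hw2 : ∀ x : ℝ, HasDerivAt (fun y => aK1 y + C * Real.sin y)
        (aK2 x + C * Real.cos x) x := fun x =>
      (hasDerivAt_aK1 x).add ((Real.hasDerivAt_sin x).const_mul C)
    have hv2 : ∀ x ∈ Icc (0:ℝ) (2 * Real.pi),
        derivWithin (derivWithin v (Icc (0:ℝ) (2 * Real.pi))) (Icc (0:ℝ) (2 * Real.pi)) x
          = -(v x) := by
      intro x hx
      rw [derivWithin_congr (fun y hy => hv1 y hy) (hv1 x hx)]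
      rw [show (fun y => b1 y - (aK1 y + C * Real.sin y))
          = b1 - (fun y => aK1 y + C * Real.sin y) from rfl, ((hdb1 x hx).hasDerivWithinAt.sub (hw2 x).hasDerivWithinAt).derivWithin (hS x hx)]
      have h1 := hb2eq x hx
      have h2 := first_integral_aKdV x
      rw [hvdef, hCdef]
      simp only
      linarith
    -- energy
    set E : ℝ → ℝ := fun y => v y * v y
        + derivWithin v (Icc (0:ℝ) (2 * Real.pi)) y * derivWithin v (Icc (0:ℝ) (2 * Real.pi)) y
      with hEdef
    have hE0 : ∀ x ∈ Icc (0:ℝ) (2 * Real.pi),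
        derivWithin E (Icc (0:ℝ) (2 * Real.pi)) x = 0 := by
      intro x hx
      have hvx := (hdv x hx).hasDerivWithinAt
      have hv1x : HasDerivWithinAt (derivWithin v (Icc (0:ℝ) (2 * Real.pi)))
          (-(v x)) (Icc (0:ℝ) (2 * Real.pi)) x := by
        have h := (hdv1 x hx).hasDerivWithinAt
        rwa [hv2 x hx] at h
      have h : derivWithin (fun y => v y * v y + derivWithin v (Icc (0:ℝ) (2 * Real.pi)) y
          * derivWithin v (Icc (0:ℝ) (2 * Real.pi)) y) (Icc (0:ℝ) (2 * Real.pi)) x = _ :=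
        ((hvx.mul hvx).add (hv1x.mul hv1x)).derivWithin (hS x hx)
      rw [hEdef, h]
      ring
    have hEc : ∀ x ∈ Icc (0:ℝ) (2 * Real.pi), E x = E 0 :=
      constant_of_derivWithin_zero ((hdv.mul hdv).add (hdv1.mul hdv1))
        fun x hx => hE0 x (Ico_subset_Icc_self hx)
    have hvL : v (2 * Real.pi) = 0 := by
      rw [hvdef]
      simp only
      rw [hbL, aKdV_two_pi, Real.cos_two_pi]
      ring
    have hv1L : derivWithin v (Icc (0:ℝ) (2 * Real.pi)) (2 * Real.pi) = 0 := by
      rw [hv1 _ hmemL, hb1L, aK1_two_pi, Real.sin_two_pi]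
      ring
    have hEL : E (2 * Real.pi) = 0 := by
      rw [hEdef]
      simp only
      rw [hvL, hv1L]
      ring
    have hE00 : E 0 = 0 := by rw [← hEc _ hmemL, hEL]
    have hv0 : ∀ x ∈ Icc (0:ℝ) (2 * Real.pi), v x = 0 := by
      intro x hx
      have h := hEc x hx
      rw [hE00, hEdef] at h
      simp only at h
      have h2 : v x * v x = 0 :=
        ((add_eq_zero_iff_of_nonneg (mul_self_nonneg _) (mul_self_nonneg _)).mp h).1
      exact mul_self_eq_zero.mp h2
    have hbrep : ∀ x ∈ Icc (0:ℝ) (2 * Real.pi),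
        b x = aKdV x + C - C * Real.cos x := by
      intro x hx
      have h := hv0 x hx
      rw [hvdef] at h
      simp only at h
      linarith
    -- orthogonality pins down C
    have hphi_cont : Continuous phiKdV := by
      unfold phiKdV
      fun_prop
    have hint1 : IntervalIntegrable (fun x => aKdV x * phiKdV x) volume 0 (2 * Real.pi) :=
      (cont_aKdV.mul hphi_cont).intervalIntegrable 0 (2 * Real.pi)
    have hint2 : IntervalIntegrable (fun x => C * ((1 - Real.cos x) * phiKdV x)) volume
        0 (2 * Real.pi) :=
      (continuous_const.mul ((continuous_const.sub Real.continuous_cos).mul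
        hphi_cont)).intervalIntegrable 0 (2 * Real.pi)
    have hcongr : (∫ x in (0:ℝ)..(2 * Real.pi), b x * phiKdV x)
        = ∫ x in (0:ℝ)..(2 * Real.pi),
            (aKdV x * phiKdV x + C * ((1 - Real.cos x) * phiKdV x)) := by
      apply intervalIntegral.integral_congr
      intro x hx
      rw [Set.uIcc_of_le (le_of_lt h2π)] at hx
      simp only
      rw [hbrep x hx]
      ring
    rw [hcongr, intervalIntegral.integral_add hint1 hint2,
      intervalIntegral.integral_const_mul, integral_aKdV_phi, integral_one_sub_cos_phi,
      zero_add] at hOrth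
    have hC0 : C = 0 := by
      rcases mul_eq_zero.mp hOrth with h | h
      · exact h
      · exact absurd h sqrt3pi_ne
    intro x hx
    rw [hbrep x hx, hC0]
    ring
end

section
/- Let φ(x) = (1 − cos x)/√(3π) and a(x) = 2/(27π) − (11/(108π)) cos x − (1/3) sin x + (x sin x)/(6π) + (1/(36π)) cos(2x), both on [0,2π]. Then ∫₀^{2π} a(x) φ(x) φ′(x) dx = −1/18. In particular this integral is strictly negative, which is the coefficient determining the asymptotic stability of the origin in the reduced one-dimensional dynamics p′(t) = p(t)³ ∫₀^{2π} a φ φ′ dx + O(p(t)⁴) = −p(t)³/18 + O(p(t)⁴) on the center manifold. -/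
open Set Real MeasureTheory

/-- An explicit antiderivative of `a(x) φ(x) φ′(x)`. -/
noncomputable def FKdV (y : ℝ) : ℝ :=
  (-37/5184 + (-11/324) * Real.cos y + 7/648 * Real.cos y ^ 2 + (-11/972) * Real.cos y ^ 3
    + 1/216 * Real.cos y ^ 4 + Real.pi/18 * (Real.sin y * Real.cos y)
    + Real.pi/27 * Real.sin y ^ 3 + (-Real.pi/18) * y + (-1/36) * (y * Real.sin y * Real.cos y)
    + (-1/54) * (y * Real.sin y ^ 3) + 1/72 * y ^ 2) / Real.pi ^ 2

lemma phiKdV_deriv : deriv phiKdV = fun x => Real.sin x / Real.sqrt (3 * Real.pi) := by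
  funext x
  have h : HasDerivAt phiKdV ((0 - -Real.sin x) / Real.sqrt (3 * Real.pi)) x :=
    ((hasDerivAt_const x (1:ℝ)).sub (Real.hasDerivAt_cos x)).div_const _
  simpa using h.deriv

lemma FKdV_hasDeriv_raw (x : ℝ) :
    HasDerivAt FKdV
      ((11/324*Real.sin x - 7/324*Real.sin x*Real.cos x + 11/324*Real.sin x*Real.cos x^2
        - 1/54*Real.sin x*Real.cos x^3 + Real.pi/18*(Real.cos x^2 - Real.sin x^2)
        + Real.pi/9*Real.sin x^2*Real.cos x - Real.pi/18
        - 1/36*(Real.sin x*Real.cos x + x*(Real.cos x^2 - Real.sin x^2))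
        - 1/54*(Real.sin x^3 + 3*x*Real.sin x^2*Real.cos x) + x/36) / Real.pi^2) x := by
  have hc := Real.hasDerivAt_cos x
  have hs := Real.hasDerivAt_sin x
  have hid := hasDerivAt_id' (x := x)
  have H := (((((((((((hasDerivAt_const x (-37/5184:ℝ)).add
    (hc.const_mul (-11/324:ℝ))).add
    ((hc.pow 2).const_mul (7/648:ℝ))).add
    ((hc.pow 3).const_mul (-11/972:ℝ))).add
    ((hc.pow 4).const_mul (1/216:ℝ))).add
    ((hs.mul hc).const_mul (Real.pi/18))).add
    ((hs.pow 3).const_mul (Real.pi/27))).add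
    (hid.const_mul (-Real.pi/18))).add
    (((hid.mul hs).mul hc).const_mul (-1/36:ℝ))).add
    ((hid.mul (hs.pow 3)).const_mul (-1/54:ℝ))).add
    ((hasDerivAt_pow 2 x).const_mul (1/72:ℝ))).div_const (Real.pi ^ 2)
  refine H.congr_deriv ?_
  push_cast [Pi.mul_apply, Pi.pow_apply]
  ring

lemma FKdV_key (x : ℝ) :
    (11/324*Real.sin x - 7/324*Real.sin x*Real.cos x + 11/324*Real.sin x*Real.cos x^2
        - 1/54*Real.sin x*Real.cos x^3 + Real.pi/18*(Real.cos x^2 - Real.sin x^2)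
        + Real.pi/9*Real.sin x^2*Real.cos x - Real.pi/18
        - 1/36*(Real.sin x*Real.cos x + x*(Real.cos x^2 - Real.sin x^2))
        - 1/54*(Real.sin x^3 + 3*x*Real.sin x^2*Real.cos x) + x/36) / Real.pi^2
      = aKdV x * phiKdV x * (Real.sin x / Real.sqrt (3 * Real.pi)) := by
  have hq : Real.sqrt (3*Real.pi) * Real.sqrt (3*Real.pi) = 3*Real.pi :=
    Real.mul_self_sqrt (by positivity)
  have hprod : phiKdV x * (Real.sin x / Real.sqrt (3*Real.pi))
      = (1 - Real.cos x) * Real.sin x / (3*Real.pi) := by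
    rw [phiKdV, div_mul_div_comm, hq]
  rw [mul_assoc (aKdV x), hprod, aKdV, Real.cos_two_mul]
  have hπ := Real.pi_ne_zero
  field_simp
  linear_combination (-297538935552 * Real.sin x
    + 892616806656 * Real.pi - 446308403328 * x) * Real.sin_sq_add_cos_sq x

lemma FKdV_hasDeriv (x : ℝ) :
    HasDerivAt FKdV (aKdV x * phiKdV x * (Real.sin x / Real.sqrt (3 * Real.pi))) x := by
  have := FKdV_hasDeriv_raw x
  rwa [FKdV_key x] at this

/-- the coefficient determining the asymptotic stability of the origin
in the reduced one-dimensional dynamics on the center manifold: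
`∫₀^{2π} a(x) φ(x) φ′(x) dx = −1/18 < 0`. -/
theorem center_manifold_cubic_coefficient :
    (∫ x in (0:ℝ)..(2 * Real.pi), aKdV x * phiKdV x * deriv phiKdV x)
      = -(1/18 : ℝ) := by
  have hπ := Real.pi_ne_zero
  simp only [phiKdV_deriv]
  have hcont : Continuous fun x => aKdV x * phiKdV x * (Real.sin x / Real.sqrt (3 * Real.pi)) := by
    unfold aKdV phiKdV
    fun_prop
  rw [intervalIntegral.integral_eq_sub_of_hasDerivAt
    (fun y _ => FKdV_hasDeriv y) (hcont.intervalIntegrable 0 (2 * Real.pi))]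
  simp only [FKdV, Real.sin_two_pi, Real.cos_two_pi, Real.sin_zero, Real.cos_zero]
  field_simp
  ring
end
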